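/- A G-invariant SDP feasibility set F_X = {X ⪰ 0 : A(X)=b} contains a positive definite matrix if and only if F_X ∩ A_G contains a positive definite matrix, where A_G is the commutant of the group G. -/

import Mathlib

/-!
Averaging a positive definite `X ∈ F` over the group, `X̄ = |G|⁻¹ ∑_{P ∈ G} P X Pᵀ`, gives a
positive definite matrix (the summand `P = 1` is `X`, the others are positive semidefinite) which
lies in `F` because `F` is convex and `G`-invariant. Left multiplication by `Q ∈ G` maps the finite
set `G` injectively into itself, hence permutes it, so `Q X̄ Qᵀ = X̄`; as `Qᵀ Q = 1`, this says that
`X̄` commutes with `Q`.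
-/

open Matrix

def IsPermMatrix {n : ℕ} (P : Matrix (Fin n) (Fin n) ℝ) : Prop :=
  ∃ σ : Equiv.Perm (Fin n), ∀ i j, P i j = if i = σ j then 1 else 0

lemma IsPermMatrix.exists_eq_permMatrix {n : ℕ} {P : Matrix (Fin n) (Fin n) ℝ}
    (h : IsPermMatrix P) : ∃ σ : Equiv.Perm (Fin n), P = σ.permMatrix ℝ := by
  obtain ⟨σ, hσ⟩ := h
  refine ⟨σ⁻¹, ext fun i j => ?_⟩
  simp [hσ, PEquiv.toMatrix_apply, Equiv.eq_symm_apply, eq_comm]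

lemma IsPermMatrix.transpose_mul_self {n : ℕ} {P : Matrix (Fin n) (Fin n) ℝ}
    (h : IsPermMatrix P) : Pᵀ * P = 1 := by
  obtain ⟨σ, rfl⟩ := h.exists_eq_permMatrix
  rw [transpose_permMatrix, ← permMatrix_mul, mul_inv_cancel, permMatrix_one]

lemma Finset.sum_comp_mul_left_of_isLeftRegular {M β : Type*} [Monoid M] [AddCommMonoid β]
    {G : Finset M} {Q : M} (hQ : IsLeftRegular Q) (hmul : ∀ P ∈ G, Q * P ∈ G) (f : M → β) :
    ∑ P ∈ G, f (Q * P) = ∑ P ∈ G, f P :=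
  Finset.sum_nbij (Q * ·) hmul hQ.injOn
    (Finset.surjOn_of_injOn_of_card_le _ hmul hQ.injOn le_rfl) fun _ _ => rfl

lemma convex_setOf_posSemidef_and_map_eq {ι V : Type*} [AddCommGroup V] [Module ℝ V]
    (𝒜 : Matrix ι ι ℝ →ₗ[ℝ] V) (b : V) : Convex ℝ {X | X.PosSemidef ∧ 𝒜 X = b} := by
  intro X hX Y hY s t hs ht hst
  refine ⟨(hX.1.smul hs).add (hY.1.smul ht), ?_⟩
  rw [map_add, map_smul, map_smul, hX.2, hY.2, ← add_smul, hst, one_smul]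

section ConjSum

variable {ι : Type*} [Fintype ι]

def conjSum {R : Type*} [CommSemiring R] (G : Finset (Matrix ι ι R)) (X : Matrix ι ι R) :
    Matrix ι ι R :=
  ∑ P ∈ G, P * X * Pᵀ

lemma Convex.inv_card_smul_conjSum_mem {F : Set (Matrix ι ι ℝ)} (hF : Convex ℝ F)
    {G : Finset (Matrix ι ι ℝ)} (hG : G.Nonempty) {X : Matrix ι ι ℝ}
    (hX : ∀ P ∈ G, P * X * Pᵀ ∈ F) : (G.card : ℝ)⁻¹ • conjSum G X ∈ F := by
  rw [conjSum, Finset.smul_sum]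
  exact hF.sum_mem (fun _ _ => by positivity) (by simp [hG.card_ne_zero]) hX

variable [DecidableEq ι]

lemma mul_conjSum_mul_transpose {R : Type*} [CommSemiring R] {G : Finset (Matrix ι ι R)}
    {Q : Matrix ι ι R} (hQ : IsLeftRegular Q) (hmul : ∀ P ∈ G, Q * P ∈ G) (X : Matrix ι ι R) :
    Q * conjSum G X * Qᵀ = conjSum G X := by
  calc Q * conjSum G X * Qᵀ = ∑ P ∈ G, (Q * P) * X * (Q * P)ᵀ := by
        rw [conjSum, Finset.mul_sum, Finset.sum_mul]
        exact Finset.sum_congr rfl fun P _ => by simp only [transpose_mul, Matrix.mul_assoc]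
    _ = conjSum G X := Finset.sum_comp_mul_left_of_isLeftRegular hQ hmul (fun P => P * X * Pᵀ)

lemma commute_conjSum {R : Type*} [CommSemiring R] {G : Finset (Matrix ι ι R)}
    {Q : Matrix ι ι R} (hQ : Qᵀ * Q = 1) (hmul : ∀ P ∈ G, Q * P ∈ G) (X : Matrix ι ι R) :
    Commute Q (conjSum G X) := by
  have hconj := mul_conjSum_mul_transpose (isLeftRegular_of_mul_eq_one hQ) hmul X
  calc Q * conjSum G X = Q * conjSum G X * Qᵀ * Q := by rw [Matrix.mul_assoc _ Qᵀ, hQ, mul_one]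
    _ = conjSum G X * Q := by rw [hconj]

lemma posDef_conjSum {G : Finset (Matrix ι ι ℝ)} (hone : 1 ∈ G)
    {X : Matrix ι ι ℝ} (hX : X.PosDef) : (conjSum G X).PosDef := by
  rw [conjSum, ← Finset.add_sum_erase G _ hone, Matrix.one_mul, transpose_one, Matrix.mul_one]
  exact hX.add_posSemidef <| posSemidef_sum _ fun P _ => by
    simpa using hX.posSemidef.mul_mul_conjTranspose_same P

end ConjSum

theorem strict_feasibility_iff_commutant_general {n m : ℕ}
    (𝒜 : Matrix (Fin n) (Fin n) ℝ →ₗ[ℝ] (Fin m → ℝ)) (b : Fin m → ℝ)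
    (G : Finset (Matrix (Fin n) (Fin n) ℝ))
    (hone : (1 : Matrix (Fin n) (Fin n) ℝ) ∈ G)
    (hperm : ∀ P ∈ G, IsPermMatrix P)
    (hmul : ∀ P ∈ G, ∀ Q ∈ G, P * Q ∈ G)
    (F : Set (Matrix (Fin n) (Fin n) ℝ))
    (hF : F = {X | X.PosSemidef ∧ 𝒜 X = b})
    (hinvar : ∀ X ∈ F, ∀ P ∈ G, P * X * Pᵀ ∈ F) :
    let AG : Set (Matrix (Fin n) (Fin n) ℝ) := {M | ∀ P ∈ G, P * M = M * P}
    (∃ X ∈ F, X.PosDef) ↔ (∃ X ∈ F ∩ AG, X.PosDef) := by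
  refine ⟨fun ⟨X, hXF, hX⟩ => ?_, fun ⟨X, ⟨hXF, _⟩, hX⟩ => ⟨X, hXF, hX⟩⟩
  have hG : G.Nonempty := ⟨1, hone⟩
  have hcard : (0 : ℝ) < (G.card : ℝ)⁻¹ := by simpa using hG.card_pos
  refine ⟨(G.card : ℝ)⁻¹ • conjSum G X, ⟨?_, fun Q hQ => ?_⟩, (posDef_conjSum hone hX).smul hcard⟩
  · exact (hF ▸ convex_setOf_posSemidef_and_map_eq 𝒜 b).inv_card_smul_conjSum_mem hG
      (hinvar X hXF)
  · exact ((commute_conjSum (hperm Q hQ).transpose_mul_self (hmul Q hQ) X).smul_right _).eq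

/-- A `G`-invariant SDP feasibility set `F = {X ⪰ 0 : 𝒜(X) = b}` contains a positive
definite matrix if and only if `F ∩ A_G` contains a positive definite matrix, where
`A_G` is the commutant of the group `G`. -/
theorem strict_feasibility_iff_commutant {n m : ℕ}
    (𝒜 : Matrix (Fin n) (Fin n) ℝ →ₗ[ℝ] (Fin m → ℝ)) (b : Fin m → ℝ)
    (G : Finset (Matrix (Fin n) (Fin n) ℝ))
    (hone : (1 : Matrix (Fin n) (Fin n) ℝ) ∈ G)
    (hperm : ∀ P ∈ G, IsPermMatrix P)
    (hmul : ∀ P ∈ G, ∀ Q ∈ G, P * Q ∈ G)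
    (hinv : ∀ P ∈ G, Pᵀ ∈ G)
    (F : Set (Matrix (Fin n) (Fin n) ℝ))
    (hF : F = {X | X.PosSemidef ∧ 𝒜 X = b})
    (hinvar : ∀ X ∈ F, ∀ P ∈ G, P * X * Pᵀ ∈ F) :
    let AG : Set (Matrix (Fin n) (Fin n) ℝ) := {M | ∀ P ∈ G, P * M = M * P}
    (∃ X ∈ F, X.PosDef) ↔ (∃ X ∈ F ∩ AG, X.PosDef) :=
  strict_feasibility_iff_commutant_general 𝒜 b G hone hperm hmul F hF hinvar
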